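/- arXiv:1305.0077 — 2 statements merged into one kernel-verified Lean document; each statement's English description precedes it below -/
import Mathlib

section
/- Let W be a symmetric 2×2 real matrix and let F^{ij} be a symmetric positive definite 2×2 matrix with eigenvalues between λ and Λ (0 < λ ≤ Λ). If the full contraction ∑_{i,j} F^{ij} W_{ij} = 0, then W_{11}² + 2W_{12}² + W_{22}² ≤ -(2Λ/λ) · det W. In particular det W ≤ 0. -/
open Matrix

set_option maxHeartbeats 1000000

/-- If W is a symmetric 2×2 real matrix, F is a symmetric positive definite
2×2 matrix with eigenvalues between lam and Lam (0 < lam ≤ Lam), and the full contraction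
∑ F^{ij} W_{ij} = 0, then W₁₁² + 2W₁₂² + W₂₂² ≤ -(2Lam/lam)·det W; in particular det W ≤ 0. -/
theorem stmt0 (W F : Matrix (Fin 2) (Fin 2) ℝ) (lam Lam : ℝ)
    (hWsym : W.IsSymm) (hFsym : F.IsSymm)
    (hlam : 0 < lam) (hlamLam : lam ≤ Lam)
    (hell : ∀ ξ : Fin 2 → ℝ,
      lam * (ξ 0 ^ 2 + ξ 1 ^ 2) ≤ ξ ⬝ᵥ F.mulVec ξ ∧
      ξ ⬝ᵥ F.mulVec ξ ≤ Lam * (ξ 0 ^ 2 + ξ 1 ^ 2))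
    (hcontr : ∑ i, ∑ j, F i j * W i j = 0) :
    W 0 0 ^ 2 + 2 * W 0 1 ^ 2 + W 1 1 ^ 2 ≤ -(2 * Lam / lam) * W.det ∧ W.det ≤ 0 := by
  have hW10 : W 1 0 = W 0 1 := by
    have := congrFun (congrFun hWsym 0) 1
    simpa [Matrix.transpose_apply] using this
  have hF10 : F 1 0 = F 0 1 := by
    have := congrFun (congrFun hFsym 0) 1
    simpa [Matrix.transpose_apply] using this
  simp only [Fin.sum_univ_two, hF10, hW10] at hcontr
  set a := F 0 0 with ha
  set b := F 0 1 with hb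
  set c := F 1 1 with hc
  set w := W 0 0 with hw
  set x := W 0 1 with hx
  set z := W 1 1 with hz
  have h11 := hell ![1, 0]
  have h22 := hell ![0, 1]
  simp [Matrix.mulVec, dotProduct, Fin.sum_univ_two, hF10, ← ha, ← hb, ← hc] at h11 h22
  have hlow : ∀ t : ℝ, 0 ≤ (a - lam) * (t * t) + (2 * b) * t + (c - lam) := by
    intro t
    have h := (hell ![t, 1]).1
    simp [Matrix.mulVec, dotProduct, Fin.sum_univ_two, hF10, ← ha, ← hb, ← hc] at h
    nlinarith [h]
  have hhigh : ∀ t : ℝ, 0 ≤ (Lam - a) * (t * t) + (-(2 * b)) * t + (Lam - c) := by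
    intro t
    have h := (hell ![t, 1]).2
    simp [Matrix.mulVec, dotProduct, Fin.sum_univ_two, hF10, ← ha, ← hb, ← hc] at h
    nlinarith [h]
  have hb1 : b ^ 2 ≤ (a - lam) * (c - lam) := by
    have := discrim_le_zero hlow
    rw [discrim] at this; nlinarith [this]
  have hb2 : b ^ 2 ≤ (Lam - a) * (Lam - c) := by
    have := discrim_le_zero hhigh
    rw [discrim] at this; nlinarith [this]
  obtain ⟨m, hm⟩ : ∃ m : ℝ, m = (a + c) / 2 := ⟨_, rfl⟩
  obtain ⟨d, hd⟩ : ∃ d : ℝ, d = (a - c) / 2 := ⟨_, rfl⟩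
  obtain ⟨r2, hr2⟩ : ∃ r2 : ℝ, r2 = d ^ 2 + b ^ 2 := ⟨_, rfl⟩
  obtain ⟨S, hS⟩ : ∃ S : ℝ, S = (w + z) ^ 2 := ⟨_, rfl⟩
  obtain ⟨D, hD'⟩ : ∃ D : ℝ, D = x ^ 2 - w * z := ⟨_, rfl⟩
  have hmlam : lam ≤ m := by rw [hm]; linarith [h11.1, h22.1]
  have hmLam : m ≤ Lam := by rw [hm]; linarith [h11.2, h22.2]
  have hSnn : 0 ≤ S := by rw [hS]; positivity
  have hr1 : r2 ≤ (m - lam) ^ 2 := by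
    have hid : (m - lam) ^ 2 - d ^ 2 = (a - lam) * (c - lam) := by rw [hm, hd]; ring
    rw [hr2]; linarith [hb1]
  have hrU : r2 ≤ (Lam - m) ^ 2 := by
    have hid : (Lam - m) ^ 2 - d ^ 2 = (Lam - a) * (Lam - c) := by rw [hm, hd]; ring
    rw [hr2]; linarith [hb2]
  have hr2nn : 0 ≤ r2 := by rw [hr2]; positivity
  have hmr : lam ^ 2 ≤ m ^ 2 - r2 := by nlinarith [hr1, hmlam, hlam]
  have hCS : m ^ 2 * S ≤ r2 * (S + 4 * D) := by
    have hcon : m * (w + z) + (d * (w - z) + 2 * b * x) = 0 := by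
      rw [hm, hd]; linear_combination hcontr
    have hsq : m ^ 2 * S = (d * (w - z) + 2 * b * x) ^ 2 := by
      rw [hS]; linear_combination (m * (w + z) - (d * (w - z) + 2 * b * x)) * hcon
    rw [hsq, hr2, hS, hD']
    nlinarith [sq_nonneg (d * (2 * x) - b * (w - z))]
  have hDnn : 0 ≤ D := by
    by_contra hneg
    push_neg at hneg
    have h4D : 4 * D = 4 * x ^ 2 + (w - z) ^ 2 - S := by rw [hD', hS]; ring
    have hS4 : 4 * (-D) ≤ S := by nlinarith [h4D, sq_nonneg (w - z), sq_nonneg x]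
    have h5 : lam ^ 2 * (4 * (-D)) ≤ (m ^ 2 - r2) * S :=
      mul_le_mul hmr hS4 (by linarith) (by nlinarith [hmr, sq_nonneg lam])
    have h7 : 0 ≤ r2 * (-D) := mul_nonneg hr2nn (by linarith)
    have h8 : 0 < lam ^ 2 * (-D) := mul_pos (pow_pos hlam 2) (by linarith)
    nlinarith [hCS, h5, h7, h8]
  have key2 : (lam + Lam) * r2 ≤ (Lam - lam) * m ^ 2 := by
    rcases le_total m ((lam + Lam) / 2) with hcase | hcase
    · nlinarith [hr1, hmlam, hlam, mul_nonneg (sub_nonneg.2 hmlam)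
        (by linarith : (0:ℝ) ≤ (lam + Lam) / 2 - m), hr2nn]
    · nlinarith [hrU, hmLam, hlam, mul_nonneg (sub_nonneg.2 hmLam)
        (by linarith : (0:ℝ) ≤ m - (lam + Lam) / 2), hr2nn]
  have hmain : lam * S ≤ 2 * (Lam - lam) * D := by
    have h1 := mul_le_mul_of_nonneg_left hCS hlam.le
    have h2 := mul_le_mul_of_nonneg_right key2 hDnn
    have h3 : lam * S * (m ^ 2 - r2) ≤ 2 * (Lam - lam) * D * (m ^ 2 - r2) := by
      nlinarith [h1, h2]
    have hpos : 0 < m ^ 2 - r2 := by nlinarith [hmr, hlam]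
    exact le_of_mul_le_mul_right h3 hpos
  have key : lam * (w ^ 2 + 2 * x ^ 2 + z ^ 2) ≤ 2 * Lam * D := by
    have e1 : lam * (w ^ 2 + 2 * x ^ 2 + z ^ 2) = lam * S + 2 * lam * D := by
      rw [hS, hD']; ring
    linarith [hmain, e1]
  have hdet : W.det = w * z - x * x := by
    rw [Matrix.det_fin_two, hW10]
  rw [hdet]
  constructor
  · have e2 : lam * (-(2 * Lam / lam) * (w * z - x * x)) = 2 * Lam * D := by
      rw [hD']
      have hl : lam ≠ 0 := ne_of_gt hlam
      field_simp
      ring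
    have h10 : lam * (w ^ 2 + 2 * x ^ 2 + z ^ 2) ≤
        lam * (-(2 * Lam / lam) * (w * z - x * x)) := by
      rw [e2]; exact key
    exact le_of_mul_le_mul_left h10 hlam
  · have h9 : (0:ℝ) ≤ x ^ 2 - w * z := hD' ▸ hDnn
    have h9' : x * x = x ^ 2 := (sq x).symm
    linarith [h9, h9'.le, h9'.ge]
end

section
/- Let W be a symmetric 2×2 real matrix and F a symmetric 2×2 matrix with λI ≤ F ≤ ΛI for 0 < λ ≤ Λ. If trace(F·W) = 0, then det W = -(1/F^{22})·(F^{11} W_{11}² + 2 F^{12} W_{11} W_{12} + F^{22} W_{12}²) and hence det W ≤ -(λ/Λ)(W_{11}² + W_{12}²). -/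
open Matrix

/-- If W is a symmetric 2×2 real matrix, F symmetric with λI ≤ F ≤ ΛI
(0 < lam ≤ Lam) and trace(F·W) = 0 (i.e. F¹¹W₁₁ + 2F¹²W₁₂ + F²²W₂₂ = 0), then
det W = -(1/F²²)(F¹¹W₁₁² + 2F¹²W₁₁W₁₂ + F²²W₁₂²) and hence
det W ≤ -(lam/Lam)(W₁₁² + W₁₂²). -/
theorem stmt1 (W F : Matrix (Fin 2) (Fin 2) ℝ) (lam Lam : ℝ)
    (hWsym : W.IsSymm) (hFsym : F.IsSymm)
    (hlam : 0 < lam) (hlamLam : lam ≤ Lam)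
    (hell : ∀ ξ : Fin 2 → ℝ,
      lam * (ξ 0 ^ 2 + ξ 1 ^ 2) ≤ ξ ⬝ᵥ F.mulVec ξ ∧
      ξ ⬝ᵥ F.mulVec ξ ≤ Lam * (ξ 0 ^ 2 + ξ 1 ^ 2))
    (hcontr : F 0 0 * W 0 0 + 2 * F 0 1 * W 0 1 + F 1 1 * W 1 1 = 0) :
    W.det = -(1 / F 1 1) *
        (F 0 0 * W 0 0 ^ 2 + 2 * F 0 1 * W 0 0 * W 0 1 + F 1 1 * W 0 1 ^ 2) ∧
    W.det ≤ -(lam / Lam) * (W 0 0 ^ 2 + W 0 1 ^ 2) := by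
  have hW10 : W 1 0 = W 0 1 := hWsym.apply 0 1
  have hF10 : F 1 0 = F 0 1 := hFsym.apply 0 1
  have he1 := hell ![0, 1]
  simp [dotProduct, Matrix.mulVec, Fin.sum_univ_two] at he1
  obtain ⟨hF22lam, hF22Lam⟩ := he1
  have hF22pos : 0 < F 1 1 := lt_of_lt_of_le hlam hF22lam
  have hLampos : 0 < Lam := lt_of_lt_of_le hlam hlamLam
  have hq := (hell ![W 0 0, W 0 1]).1
  simp [dotProduct, Matrix.mulVec, Fin.sum_univ_two, hF10] at hq
  have hdet : W.det = W 0 0 * W 1 1 - W 0 1 * W 1 0 := by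
    rw [Matrix.det_fin_two]
  have hQ : W.det = -(1 / F 1 1) *
      (F 0 0 * W 0 0 ^ 2 + 2 * F 0 1 * W 0 0 * W 0 1 + F 1 1 * W 0 1 ^ 2) := by
    rw [hdet, hW10]
    field_simp
    linear_combination (W 0 0) * hcontr
  refine ⟨hQ, ?_⟩
  rw [hQ]
  rw [neg_mul, neg_mul, neg_le_neg_iff, div_mul_eq_mul_div, one_div_mul_eq_div,
    div_le_div_iff₀ hLampos hF22pos]
  have hS : (0:ℝ) ≤ W 0 0 ^ 2 + W 0 1 ^ 2 := by positivity
  have h1 : lam * (W 0 0 ^ 2 + W 0 1 ^ 2) ≤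
      F 0 0 * W 0 0 ^ 2 + 2 * F 0 1 * W 0 0 * W 0 1 + F 1 1 * W 0 1 ^ 2 := by
    nlinarith [hq]
  nlinarith [mul_nonneg hlam.le hS, h1, hF22Lam, hLampos]
end
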